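/- Role removal does not create new crashed roles other than the removed role: if p ∈ roles(G), then crashedRoles(G ∖ p) ∖ {p} ⊆ crashedRoles(G). -/

import Mathlib

/-! Roles, base types and message labels. -/

abbrev Role : Type := ℕ
abbrev Base : Type := ℕ

/-- Message labels, with a distinguished `crash` pseudo-label. -/
inductive Label where
  | crash : Label
  | name : ℕ → Label
deriving DecidableEq
/-! Global types with crash annotations and runtime constructs. -/

mutual
inductive GType where
  /-- `comm p q qc bs`: a transmission `p → q† : bs`, where `qc` records whether the
  receiver `q` carries a crash annotation. -/
  | comm : Role → Role → Bool → GBranches → GType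
  /-- `transit p pc q j bs`: a transmission en route `p† ⇝ q : j bs`, with selected
  label `j`; `pc` records whether the sender carries a crash annotation. -/
  | transit : Role → Bool → Role → Label → GBranches → GType
  | mu : GType → GType
  | var : ℕ → GType
  | endg : GType
inductive GBranches where
  | nil : GBranches
  | cons : Label → Base → GType → GBranches → GBranches
end

mutual
/-- Active (non-crash-annotated) roles of a global type. -/
def GType.roles : GType → List Role
  | .comm p q qc bs => p :: ((if qc then [] else [q]) ++ GBranches.roles bs)
  | .transit _ _ q _ bs => q :: GBranches.roles bs
  | .mu G => GType.roles G
  | .var _ => []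
  | .endg => []
def GBranches.roles : GBranches → List Role
  | .nil => []
  | .cons _ _ G bs => GType.roles G ++ GBranches.roles bs
end

mutual
/-- Crashed (crash-annotated) roles of a global type.  A crashed sender of an en route
transmission is not counted unless it appears crashed in a continuation. -/
def GType.crashed : GType → List Role
  | .comm _ q qc bs => (if qc then [q] else []) ++ GBranches.crashed bs
  | .transit _ _ _ _ bs => GBranches.crashed bs
  | .mu G => GType.crashed G
  | .var _ => []
  | .endg => []
def GBranches.crashed : GBranches → List Role
  | .nil => []
  | .cons _ _ G bs => GType.crashed G ++ GBranches.crashed bs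
end

/-- Membership of a branch `l(B).G` in a global branch list. -/
inductive GBMem : Label → Base → GType → GBranches → Prop where
  | head {l B G bs} : GBMem l B G (.cons l B G bs)
  | tail {l B G l' B' G' bs} : GBMem l B G bs → GBMem l B G (.cons l' B' G' bs)

def GHasLabel (l : Label) (bs : GBranches) : Prop := ∃ B G, GBMem l B G bs

mutual
def GType.ClosedUnder : ℕ → GType → Prop
  | k, .comm _ _ _ bs => GBranches.ClosedUnder k bs
  | k, .transit _ _ _ _ bs => GBranches.ClosedUnder k bs
  | k, .mu G => GType.ClosedUnder (k+1) G
  | k, .var n => n < k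
  | _, .endg => True
def GBranches.ClosedUnder : ℕ → GBranches → Prop
  | _, .nil => True
  | k, .cons _ _ G bs => GType.ClosedUnder k G ∧ GBranches.ClosedUnder k bs
end

mutual
/-- Removal of a live role `r` from a global type (a partial operation, given as a
relation): `RemoveRole G r G'` means `G ∖ r = G'`. -/
inductive RemoveRole : GType → Role → GType → Prop where
  /-- Removing the (live) sender of a transmission with a crash-handling branch
  produces an en route crash pseudo-message. -/
  | commSender {p q B Gj bs bs'} :
      GBMem Label.crash B Gj bs → RemoveRoleB bs p bs' →
      RemoveRole (.comm p q false bs) p (.transit p true q Label.crash bs')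
  /-- Removing the (live) receiver of a transmission annotates it as crashed. -/
  | commRecv {p q bs bs'} :
      p ≠ q → RemoveRoleB bs q bs' →
      RemoveRole (.comm p q false bs) q (.comm p q true bs')
  | commOther {p q r bs bs'} :
      r ≠ p → r ≠ q → RemoveRoleB bs r bs' →
      RemoveRole (.comm p q false bs) r (.comm p q false bs')
  /-- Removing the sender of a transmission towards a crashed receiver (with a
  crash branch `j`) prunes the prefix. -/
  | commCrashedSender {p q B Gj bs G'} :
      GBMem Label.crash B Gj bs → RemoveRole Gj p G' →
      RemoveRole (.comm p q true bs) p G'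
  | commCrashedOther {p q r bs bs'} :
      r ≠ p → r ≠ q → RemoveRoleB bs r bs' →
      RemoveRole (.comm p q true bs) r (.comm p q true bs')
  /-- Removing the (live) sender of an en route transmission keeps the selected
  label `j`. -/
  | transitSender {p q j bs bs'} :
      RemoveRoleB bs p bs' →
      RemoveRole (.transit p false q j bs) p (.transit p true q j bs')
  /-- Removing the receiver of an en route transmission prunes the prefix. -/
  | transitRecv {p pc q j B Gj bs G'} :
      GBMem j B Gj bs → RemoveRole Gj q G' →
      RemoveRole (.transit p pc q j bs) q G'
  | transitOther {p pc q j r bs bs'} :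
      r ≠ p → r ≠ q → RemoveRoleB bs r bs' →
      RemoveRole (.transit p pc q j bs) r (.transit p pc q j bs')
  | muKeep {G r G'} :
      RemoveRole G r G' →
      (¬ GType.ClosedUnder 0 (GType.mu G) ∨ GType.roles G' ≠ []) →
      RemoveRole (.mu G) r (.mu G')
  | muEnd {G r G'} :
      RemoveRole G r G' →
      GType.ClosedUnder 0 (GType.mu G) → GType.roles G' = [] →
      RemoveRole (.mu G) r .endg
  | var {n r} : RemoveRole (.var n) r (.var n)
  | endg {r} : RemoveRole .endg r .endg
inductive RemoveRoleB : GBranches → Role → GBranches → Prop where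
  | nil {r} : RemoveRoleB .nil r .nil
  | cons {l B G G' r bs bs'} :
      RemoveRole G r G' → RemoveRoleB bs r bs' →
      RemoveRoleB (.cons l B G bs) r (.cons l B G' bs')
end
theorem GBMem.sizeOf_lt {l B G bs} (h : GBMem l B G bs) : sizeOf G < sizeOf bs := by
  induction h with
  | head => simp; omega
  | tail _ ih => simp; omega

theorem GBMem.crashed_subset {l B G bs} (h : GBMem l B G bs) :
    ∀ q ∈ GType.crashed G, q ∈ GBranches.crashed bs := by
  induction h with
  | head => intro q hq; simp [GBranches.crashed]; exact Or.inl hq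
  | tail _ ih => intro q hq; simp [GBranches.crashed]; exact Or.inr (ih q hq)

mutual
theorem remT {G p G'} (h : RemoveRole G p G') :
    ∀ q ∈ GType.crashed G', q ≠ p → q ∈ GType.crashed G := by
  cases h with
  | @commSender _ _ _ _ bs bs' hmem hb =>
      intro q hq hne
      simp only [GType.crashed] at hq ⊢
      exact remB hb q hq hne
  | @commRecv _ q' bs bs' hne hb =>
      intro q hq hneq
      simp only [GType.crashed, List.mem_append, List.mem_cons] at hq ⊢
      rcases hq with hq | hq
      · simp at hq; exact absurd hq hneq
      · simpa using remB hb q hq hneq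
  | commOther _ _ hb =>
      intro q hq hne
      simp only [GType.crashed] at hq ⊢
      simpa using remB hb q (by simpa using hq) hne
  | @commCrashedSender _ q' _ Gj bs _ hmem hrec =>
      intro q hq hne
      have hsz := hmem.sizeOf_lt
      have := remT hrec q hq hne
      simp only [GType.crashed, List.mem_append]
      exact Or.inr (hmem.crashed_subset q this)
  | commCrashedOther _ _ hb =>
      intro q hq hne
      simp only [GType.crashed, List.mem_append, List.mem_cons] at hq ⊢
      rcases hq with hq | hq
      · exact Or.inl hq
      · exact Or.inr (remB hb q hq hne)
  | transitSender hb =>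
      intro q hq hne
      simp only [GType.crashed] at hq ⊢
      exact remB hb q hq hne
  | @transitRecv _ _ _ _ _ Gj bs _ hmem hrec =>
      intro q hq hne
      have hsz := hmem.sizeOf_lt
      have := remT hrec q hq hne
      simp only [GType.crashed]
      exact hmem.crashed_subset q this
  | transitOther _ _ hb =>
      intro q hq hne
      simp only [GType.crashed] at hq ⊢
      exact remB hb q hq hne
  | muKeep hrec _ =>
      intro q hq hne
      simp only [GType.crashed] at hq ⊢
      exact remT hrec q hq hne
  | muEnd _ _ _ =>
      intro q hq
      simp [GType.crashed] at hq
  | var => intro q hq; simp [GType.crashed] at hq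
  | endg => intro q hq; simp [GType.crashed] at hq
termination_by sizeOf G
decreasing_by
  all_goals (simp; try omega)

theorem remB {bs p bs'} (h : RemoveRoleB bs p bs') :
    ∀ q ∈ GBranches.crashed bs', q ≠ p → q ∈ GBranches.crashed bs := by
  cases h with
  | nil => intro q hq; simp [GBranches.crashed] at hq
  | cons hT hB =>
      intro q hq hne
      simp only [GBranches.crashed, List.mem_append] at hq ⊢
      rcases hq with hq | hq
      · exact Or.inl (remT (p := id p) hT q hq hne)
      · exact Or.inr (remB hB q hq hne)
termination_by sizeOf bs
decreasing_by all_goals (simp; try omega)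
end

/-- Role removal does not create new crashed roles other than the removed role. -/
theorem removeRole_crashed (G : GType) (p : Role) (G' : GType)
    (hp : p ∈ GType.roles G) (h : RemoveRole G p G') :
    ∀ q ∈ GType.crashed G', q ≠ p → q ∈ GType.crashed G := by
  exact remT h
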